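/- Let m ≥ 3 and {X₁, X₂, X₃} be the equitable 3-partition of J(2m,3) arising from a perfect matching on [2m]. Then Π₂ = {X₁ ∪ X₃, X₂} is an equitable 2-partition of J(2m,3) with quotient matrix [[6m-15, 6], [4m-8, 2m-1]], and Π₃ = {X₃, X₁ ∪ X₂} is an equitable 2-partition with quotient matrix [[5m-13, m+4], [3m-6, 3m-3]]. -/
import Mathlib


open Finset

/-- Number of neighbours (in `J(n,3)`, i.e. triples meeting in 2 elements)
of the triple `s` inside the cell `X`. -/
def nbc {n : ℕ} (X : Finset (Finset (Fin n))) (s : Finset (Fin n)) : ℕ :=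
  (X.filter fun t => (s ∩ t).card = 2).card

/-- `X₁`: triples lying entirely within `U = range u` or within `W = range w`. -/
def Y1 {n m : ℕ} (u w : Fin m → Fin n) : Finset (Finset (Fin n)) :=
  Finset.univ.filter fun s => s.card = 3 ∧
    ((∀ x ∈ s, ∃ i, u i = x) ∨ (∀ x ∈ s, ∃ i, w i = x))

/-- `X₂`: triples of the form `{uᵢ, uⱼ, wᵢ}` or `{wᵢ, wⱼ, uᵢ}` with `i ≠ j`. -/
def Y2 {n m : ℕ} (u w : Fin m → Fin n) : Finset (Finset (Fin n)) :=
  Finset.univ.filter fun s => ∃ i j, i ≠ j ∧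
    (s = {u i, u j, w i} ∨ s = {w i, w j, u i})

/-- `X₃`: triples of the form `{uᵢ, uⱼ, w_k}` or `{wᵢ, wⱼ, u_k}`, `i,j,k` distinct. -/
def Y3 {n m : ℕ} (u w : Fin m → Fin n) : Finset (Finset (Fin n)) :=
  Finset.univ.filter fun s => ∃ i j k, i ≠ j ∧ i ≠ k ∧ j ≠ k ∧
    (s = {u i, u j, w k} ∨ s = {w i, w j, u k})


section AUX
variable {m : ℕ} {u w : Fin m → Fin (2 * m)}

lemma selim_bij (hu : Function.Injective u) (hw : Function.Injective w)
    (huw : ∀ i j, u i ≠ w j) : Function.Bijective (Sum.elim u w) := by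
  rw [Fintype.bijective_iff_injective_and_card]
  refine ⟨?_, by simp [two_mul]⟩
  rintro (a|a) (b|b) h <;> simp only [Sum.elim_inl, Sum.elim_inr] at h
  · exact congrArg Sum.inl (hu h)
  · exact absurd h (huw a b)
  · exact absurd h.symm (huw b a)
  · exact congrArg Sum.inr (hw h)

noncomputable def pr (hb : Function.Bijective (Sum.elim u w)) : Fin (2*m) → Fin (2*m) :=
  fun x => Sum.elim w u ((Equiv.ofBijective _ hb).symm x)

lemma pr_u (hb : Function.Bijective (Sum.elim u w)) (i : Fin m) : pr hb (u i) = w i := by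
  have h1 : (Equiv.ofBijective _ hb) (Sum.inl i) = u i := rfl
  rw [pr, ← h1, Equiv.symm_apply_apply]; rfl

lemma pr_w (hb : Function.Bijective (Sum.elim u w)) (i : Fin m) : pr hb (w i) = u i := by
  have h1 : (Equiv.ofBijective _ hb) (Sum.inr i) = w i := rfl
  rw [pr, ← h1, Equiv.symm_apply_apply]; rfl

lemma x_cases (hb : Function.Bijective (Sum.elim u w)) (x : Fin (2*m)) : (∃ i, x = u i) ∨ (∃ i, x = w i) := by
  obtain ⟨a, rfl⟩ := hb.2 x
  cases a with
  | inl i => exact Or.inl ⟨i, rfl⟩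
  | inr i => exact Or.inr ⟨i, rfl⟩

lemma u_ne_w (hb : Function.Bijective (Sum.elim u w)) (i j : Fin m) : u i ≠ w j := by
  intro h
  have := hb.1 (show Sum.elim u w (Sum.inl i) = Sum.elim u w (Sum.inr j) from h)
  simp at this

lemma u_inj (hb : Function.Bijective (Sum.elim u w)) : Function.Injective u := fun a b h => by
  have := hb.1 (show Sum.elim u w (Sum.inl a) = Sum.elim u w (Sum.inl b) from h)
  simpa using this

lemma w_inj (hb : Function.Bijective (Sum.elim u w)) : Function.Injective w := fun a b h => by
  have := hb.1 (show Sum.elim u w (Sum.inr a) = Sum.elim u w (Sum.inr b) from h)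
  simpa using this

lemma pr_pr (hb : Function.Bijective (Sum.elim u w)) (x : Fin (2*m)) : pr hb (pr hb x) = x := by
  rcases x_cases hb x with ⟨i, rfl⟩ | ⟨i, rfl⟩
  · rw [pr_u, pr_w]
  · rw [pr_w, pr_u]

lemma pr_eq_iff (hb : Function.Bijective (Sum.elim u w)) {x z : Fin (2*m)} : pr hb x = z ↔ x = pr hb z := by
  constructor
  · rintro rfl; rw [pr_pr]
  · rintro rfl; rw [pr_pr]

lemma pr_ne (hb : Function.Bijective (Sum.elim u w)) (x : Fin (2*m)) : pr hb x ≠ x := by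
  rcases x_cases hb x with ⟨i, rfl⟩ | ⟨i, rfl⟩
  · rw [pr_u]; exact fun h => u_ne_w hb i i h.symm
  · rw [pr_w]; exact u_ne_w hb i i


lemma card3 {α : Type*} [DecidableEq α] {a b c : α} (hab : a ≠ b) (hac : a ≠ c)
    (hbc : b ≠ c) : ({a, b, c} : Finset α).card = 3 := by
  rw [Finset.card_insert_of_notMem (by simp [hab, hac]), Finset.card_pair hbc]

lemma triple_rot {α : Type*} [DecidableEq α] (a b c : α) :
    ({a, b, c} : Finset α) = {b, c, a} := by
  ext x; simp only [Finset.mem_insert, Finset.mem_singleton]; tauto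

lemma third {α : Type*} [DecidableEq α] {s : Finset α} (hcard : s.card = 3) {x y : α}
    (hxy : x ≠ y) (hx : x ∈ s) (hy : y ∈ s) :
    ∃ z, z ≠ x ∧ z ≠ y ∧ s = {x, y, z} := by
  have hsub : ({x, y} : Finset α) ⊆ s := by
    intro a ha; simp only [Finset.mem_insert, Finset.mem_singleton] at ha
    rcases ha with rfl | rfl <;> assumption
  have h1 : (s \ {x, y}).card = 1 := by
    rw [Finset.card_sdiff_of_subset hsub, hcard, Finset.card_pair hxy]
  obtain ⟨z, hz⟩ := Finset.card_eq_one.mp h1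
  have hzmem : z ∈ s \ ({x, y} : Finset α) := by rw [hz]; exact Finset.mem_singleton_self z
  rw [Finset.mem_sdiff, Finset.mem_insert, Finset.mem_singleton] at hzmem
  refine ⟨z, fun h => hzmem.2 (Or.inl h), fun h => hzmem.2 (Or.inr h), ?_⟩
  have := Finset.union_sdiff_of_subset hsub
  rw [hz] at this
  rw [← this]
  ext a; simp only [Finset.mem_union, Finset.mem_insert, Finset.mem_singleton]; tauto

def img (f : Fin m → Fin (2 * m)) : Finset (Fin (2 * m)) := Finset.image f Finset.univ

lemma mem_img {f : Fin m → Fin (2 * m)} {x : Fin (2 * m)} : x ∈ img f ↔ ∃ i, f i = x := by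
  simp [img]

lemma mem_img_or (hb : Function.Bijective (Sum.elim u w)) (x : Fin (2 * m)) :
    x ∈ img u ∨ x ∈ img w := by
  rcases x_cases hb x with ⟨i, rfl⟩ | ⟨i, rfl⟩
  · exact Or.inl (mem_img.mpr ⟨i, rfl⟩)
  · exact Or.inr (mem_img.mpr ⟨i, rfl⟩)

lemma notMem_img_u (hb : Function.Bijective (Sum.elim u w)) {x : Fin (2 * m)}
    (hx : x ∈ img w) : x ∉ img u := by
  rw [mem_img] at hx ⊢
  obtain ⟨i, rfl⟩ := hx
  rintro ⟨j, hj⟩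
  exact u_ne_w hb j i hj

lemma notMem_img_w (hb : Function.Bijective (Sum.elim u w)) {x : Fin (2 * m)}
    (hx : x ∈ img u) : x ∉ img w := by
  rw [mem_img] at hx ⊢
  obtain ⟨i, rfl⟩ := hx
  rintro ⟨j, hj⟩
  exact u_ne_w hb i j hj.symm

lemma pr_mem_img_w (hb : Function.Bijective (Sum.elim u w)) {x : Fin (2 * m)}
    (hx : x ∈ img u) : pr hb x ∈ img w := by
  obtain ⟨i, rfl⟩ := mem_img.mp hx
  rw [pr_u]; exact mem_img.mpr ⟨i, rfl⟩

lemma pr_mem_img_u (hb : Function.Bijective (Sum.elim u w)) {x : Fin (2 * m)}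
    (hx : x ∈ img w) : pr hb x ∈ img u := by
  obtain ⟨i, rfl⟩ := mem_img.mp hx
  rw [pr_w]; exact mem_img.mpr ⟨i, rfl⟩

lemma mem_Y1_iff {s : Finset (Fin (2 * m))} :
    s ∈ Y1 u w ↔ s.card = 3 ∧ (s ⊆ img u ∨ s ⊆ img w) := by
  simp [Y1, img, Finset.subset_iff, eq_comm]

lemma mem_Y2_iff (hb : Function.Bijective (Sum.elim u w)) {s : Finset (Fin (2 * m))} :
    s ∈ Y2 u w ↔ s.card = 3 ∧ ∃ x ∈ s, pr hb x ∈ s := by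
  rw [Y2, Finset.mem_filter]
  simp only [Finset.mem_univ, true_and]
  constructor
  · rintro ⟨i, j, hij, rfl | rfl⟩
    · refine ⟨card3 ((u_inj hb).ne hij) (u_ne_w hb i i) (u_ne_w hb j i), u i, by simp, ?_⟩
      rw [pr_u]; simp
    · refine ⟨card3 ((w_inj hb).ne hij) (fun h => u_ne_w hb i i h.symm)
        (fun h => u_ne_w hb i j h.symm), w i, by simp, ?_⟩
      rw [pr_w]; simp
  · rintro ⟨hcard, x, hx, hpx⟩
    obtain ⟨z, hzx, hzpx, hs⟩ := third hcard (Ne.symm (pr_ne hb x)) hx hpx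
    rcases x_cases hb x with ⟨i, rfl⟩ | ⟨i, rfl⟩
    · rw [pr_u] at hs hzpx
      rcases x_cases hb z with ⟨j, rfl⟩ | ⟨j, rfl⟩
      · refine ⟨i, j, fun h => hzx (by rw [h]), Or.inl ?_⟩
        rw [hs, Finset.pair_comm (w i) (u j)]
      · refine ⟨i, j, fun h => hzpx (by rw [h]), Or.inr ?_⟩
        rw [hs, triple_rot]
    · rw [pr_w] at hs hzpx
      rcases x_cases hb z with ⟨j, rfl⟩ | ⟨j, rfl⟩
      · refine ⟨i, j, fun h => hzpx (by rw [h]), Or.inl ?_⟩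
        rw [hs, triple_rot]
      · refine ⟨i, j, fun h => hzx (by rw [h]), Or.inr ?_⟩
        rw [hs, Finset.pair_comm (u i) (w j)]

lemma mem_Y3_iff (hb : Function.Bijective (Sum.elim u w)) {s : Finset (Fin (2 * m))} :
    s ∈ Y3 u w ↔ s.card = 3 ∧ ¬(s ⊆ img u) ∧ ¬(s ⊆ img w) ∧ ∀ x ∈ s, pr hb x ∉ s := by
  rw [Y3, Finset.mem_filter]
  simp only [Finset.mem_univ, true_and]
  constructor
  · rintro ⟨i, j, k, hij, hik, hjk, rfl | rfl⟩
    · refine ⟨card3 ((u_inj hb).ne hij) (u_ne_w hb i k) (u_ne_w hb j k), ?_, ?_, ?_⟩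
      · intro h
        exact notMem_img_u hb (mem_img.mpr ⟨k, rfl⟩) (h (by simp))
      · intro h
        exact notMem_img_w hb (mem_img.mpr ⟨i, rfl⟩) (h (by simp))
      · intro x hx
        simp only [Finset.mem_insert, Finset.mem_singleton] at hx
        rcases hx with rfl | rfl | rfl
        · rw [pr_u]
          simp only [Finset.mem_insert, Finset.mem_singleton]
          push_neg
          exact ⟨fun h => u_ne_w hb i i h.symm, fun h => u_ne_w hb j i h.symm,
            fun h => hik ((w_inj hb) h)⟩
        · rw [pr_u]
          simp only [Finset.mem_insert, Finset.mem_singleton]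
          push_neg
          exact ⟨fun h => u_ne_w hb i j h.symm, fun h => u_ne_w hb j j h.symm,
            fun h => hjk ((w_inj hb) h)⟩
        · rw [pr_w]
          simp only [Finset.mem_insert, Finset.mem_singleton]
          push_neg
          exact ⟨fun h => hik ((u_inj hb) h.symm), fun h => hjk ((u_inj hb) h.symm),
            u_ne_w hb k k⟩
    · refine ⟨card3 ((w_inj hb).ne hij) (fun h => u_ne_w hb k i h.symm)
        (fun h => u_ne_w hb k j h.symm), ?_, ?_, ?_⟩
      · intro h
        exact notMem_img_u hb (mem_img.mpr ⟨i, rfl⟩) (h (by simp))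
      · intro h
        exact notMem_img_w hb (mem_img.mpr ⟨k, rfl⟩) (h (by simp))
      · intro x hx
        simp only [Finset.mem_insert, Finset.mem_singleton] at hx
        rcases hx with rfl | rfl | rfl
        · rw [pr_w]
          simp only [Finset.mem_insert, Finset.mem_singleton]
          push_neg
          exact ⟨u_ne_w hb i i, u_ne_w hb i j, fun h => hik ((u_inj hb) h)⟩
        · rw [pr_w]
          simp only [Finset.mem_insert, Finset.mem_singleton]
          push_neg
          exact ⟨u_ne_w hb j i, u_ne_w hb j j, fun h => hjk ((u_inj hb) h)⟩
        · rw [pr_u]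
          simp only [Finset.mem_insert, Finset.mem_singleton]
          push_neg
          exact ⟨fun h => hik ((w_inj hb) h.symm), fun h => hjk ((w_inj hb) h.symm),
            fun h => u_ne_w hb k k h.symm⟩
  · rintro ⟨hcard, hnu, hnw, hpart⟩
    obtain ⟨a, ha, hau⟩ : ∃ a ∈ s, a ∉ img u := by
      by_contra h; push_neg at h; exact hnu h
    obtain ⟨b, hbmem, hbw⟩ : ∃ b ∈ s, b ∉ img w := by
      by_contra h; push_neg at h; exact hnw h
    obtain ⟨k, rfl⟩ : ∃ k, a = w k := by
      rcases x_cases hb a with ⟨i, rfl⟩ | ⟨i, rfl⟩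
      · exact absurd (mem_img.mpr ⟨i, rfl⟩) hau
      · exact ⟨i, rfl⟩
    obtain ⟨i, rfl⟩ : ∃ i, b = u i := by
      rcases x_cases hb b with ⟨i, rfl⟩ | ⟨i, rfl⟩
      · exact ⟨i, rfl⟩
      · exact absurd (mem_img.mpr ⟨i, rfl⟩) hbw
    have hik : u i ≠ w k := u_ne_w hb i k
    obtain ⟨z, hz1, hz2, hs⟩ := third hcard hik hbmem ha
    have hwi : w i ∉ s := by have := hpart (u i) hbmem; rwa [pr_u] at this
    have huk : u k ∉ s := by have := hpart (w k) ha; rwa [pr_w] at this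
    have hik2 : i ≠ k := fun h => hwi (by rw [h]; exact ha)
    rcases x_cases hb z with ⟨j, rfl⟩ | ⟨j, rfl⟩
    · have hij : i ≠ j := fun h => hz1 (by rw [h])
      have hjk : j ≠ k := fun h => huk (by rw [hs, h]; simp)
      refine ⟨i, j, k, hij, hik2, hjk, Or.inl ?_⟩
      rw [hs, Finset.pair_comm (w k) (u j)]
    · have hjk : k ≠ j := fun h => hz2 (by rw [h])
      have hij : i ≠ j := fun h => hwi (by rw [hs, h]; simp)
      refine ⟨k, j, i, hjk, fun h => hik2 h.symm, fun h => hij h.symm, Or.inr ?_⟩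
      rw [hs, triple_rot]


lemma nbc_eq_sum {n : ℕ} {s : Finset (Fin n)} (hs : s.card = 3)
    {X : Finset (Finset (Fin n))} (hX : ∀ t ∈ X, t.card = 3) :
    nbc X s = ∑ x ∈ s, ((sᶜ).filter fun y => insert y (s.erase x) ∈ X).card := by
  rw [nbc, ← Finset.card_sigma]
  refine (Finset.card_bij (fun p _ => insert p.2 (s.erase p.1)) ?_ ?_ ?_).symm
  · rintro ⟨x, y⟩ hp
    rw [Finset.mem_sigma] at hp
    obtain ⟨hx, hy⟩ := hp
    rw [Finset.mem_filter, Finset.mem_compl] at hy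
    rw [Finset.mem_filter]
    refine ⟨hy.2, ?_⟩
    have h2 : s ∩ insert y (s.erase x) = s.erase x := by
      ext a
      simp only [Finset.mem_inter, Finset.mem_insert, Finset.mem_erase]
      constructor
      · rintro ⟨has, rfl | h⟩
        · exact absurd has hy.1
        · exact h
      · intro h
        exact ⟨h.2, Or.inr h⟩
    rw [h2, Finset.card_erase_of_mem hx, hs]
  · rintro ⟨x₁, y₁⟩ h₁ ⟨x₂, y₂⟩ h₂ heq
    rw [Finset.mem_sigma, Finset.mem_filter, Finset.mem_compl] at h₁ h₂
    obtain ⟨hx₁, hy1s, -⟩ := h₁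
    obtain ⟨hx₂, hy2s, -⟩ := h₂
    simp only at heq
    have hyy : y₁ = y₂ := by
      have h3 : y₁ ∈ insert y₂ (s.erase x₂) := heq ▸ Finset.mem_insert_self y₁ _
      rcases Finset.mem_insert.mp h3 with h | h
      · exact h
      · exact absurd (Finset.mem_of_mem_erase h) hy1s
    subst hyy
    have herase : s.erase x₁ = s.erase x₂ := by
      have e1 : (insert y₁ (s.erase x₁)).erase y₁ = s.erase x₁ :=
        Finset.erase_insert (fun hm => hy1s (Finset.mem_of_mem_erase hm))
      have e2 : (insert y₁ (s.erase x₂)).erase y₁ = s.erase x₂ :=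
        Finset.erase_insert (fun hm => hy1s (Finset.mem_of_mem_erase hm))
      rw [← e1, heq, e2]
    have hxx : x₁ = x₂ := by
      by_contra hne
      have h4 : x₁ ∈ s.erase x₂ := Finset.mem_erase.mpr ⟨hne, hx₁⟩
      rw [← herase] at h4
      exact (Finset.notMem_erase x₁ s) h4
    subst hxx
    rfl
  · intro t ht
    rw [Finset.mem_filter] at ht
    have ht3 : t.card = 3 := hX t ht.1
    have h1 : (s \ t).card = 1 := by
      have := Finset.card_sdiff_add_card_inter s t
      omega
    have h2 : (t \ s).card = 1 := by
      have := Finset.card_sdiff_add_card_inter t s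
      rw [Finset.inter_comm] at this
      omega
    obtain ⟨x, hx⟩ := Finset.card_eq_one.mp h1
    obtain ⟨y, hy⟩ := Finset.card_eq_one.mp h2
    have hxf : ∀ a, a ∈ s ∧ a ∉ t ↔ a = x := by
      intro a; rw [← Finset.mem_singleton, ← hx, Finset.mem_sdiff]
    have hyf : ∀ a, a ∈ t ∧ a ∉ s ↔ a = y := by
      intro a; rw [← Finset.mem_singleton, ← hy, Finset.mem_sdiff]
    have hxs : x ∈ s := ((hxf x).mpr rfl).1
    have hys : y ∉ s := ((hyf y).mpr rfl).2
    have hyt : y ∈ t := ((hyf y).mpr rfl).1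
    have hxt : x ∉ t := ((hxf x).mpr rfl).2
    have heq : insert y (s.erase x) = t := by
      ext a
      simp only [Finset.mem_insert, Finset.mem_erase]
      constructor
      · rintro (rfl | ⟨hax, has⟩)
        · exact hyt
        · by_contra hat
          exact hax ((hxf a).mp ⟨has, hat⟩)
      · intro hat
        by_cases has : a ∈ s
        · exact Or.inr ⟨fun h => hxt (h ▸ hat), has⟩
        · exact Or.inl ((hyf a).mp ⟨hat, has⟩)
    refine ⟨⟨x, y⟩, ?_, heq⟩
    rw [Finset.mem_sigma, Finset.mem_filter, Finset.mem_compl]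
    exact ⟨hxs, hys, heq ▸ ht.1⟩


lemma matched_iff (hb : Function.Bijective (Sum.elim u w)) {b c y : Fin (2 * m)} :
    (∃ x ∈ insert y ({b, c} : Finset (Fin (2 * m))), pr hb x ∈ insert y ({b, c} : Finset (Fin (2 * m)))) ↔
      (pr hb b = c ∨ y = pr hb b ∨ y = pr hb c) := by
  have hkey : ∀ x z : Fin (2 * m), pr hb x = z ↔ x = pr hb z := fun x z => pr_eq_iff hb
  simp only [Finset.mem_insert, Finset.mem_singleton]
  constructor
  · rintro ⟨x, hx, h⟩
    rcases hx with h1 | h1 | h1 <;> rw [h1] at h <;> rcases h with h | h | h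
    · exact absurd h (pr_ne hb y)
    · exact Or.inr (Or.inl ((hkey y b).mp h))
    · exact Or.inr (Or.inr ((hkey y c).mp h))
    · exact Or.inr (Or.inl h.symm)
    · exact absurd h (pr_ne hb b)
    · exact Or.inl h
    · exact Or.inr (Or.inr h.symm)
    · exact Or.inl ((hkey c b).mp h).symm
    · exact absurd h (pr_ne hb c)
  · rintro (h | h | h)
    · exact ⟨b, Or.inr (Or.inl rfl), Or.inr (Or.inr h)⟩
    · exact ⟨b, Or.inr (Or.inl rfl), Or.inl h.symm⟩
    · exact ⟨c, Or.inr (Or.inr rfl), Or.inl h.symm⟩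

lemma matched_insert (hb : Function.Bijective (Sum.elim u w)) {b c y : Fin (2 * m)}
    (hbc : b ≠ c) (hyb : y ≠ b) (hyc : y ≠ c) :
    (insert y ({b, c} : Finset (Fin (2 * m))) ∈ Y2 u w) ↔
      (pr hb b = c ∨ y = pr hb b ∨ y = pr hb c) := by
  rw [mem_Y2_iff hb, card3 hyb hyc hbc]
  simp only [true_and]
  exact matched_iff hb

lemma Y3_insert (hb : Function.Bijective (Sum.elim u w)) {b c y : Fin (2 * m)}
    (hbc : b ≠ c) (hyb : y ≠ b) (hyc : y ≠ c) :
    (insert y ({b, c} : Finset (Fin (2 * m))) ∈ Y3 u w) ↔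
      (¬(y ∈ img u ∧ b ∈ img u ∧ c ∈ img u) ∧ ¬(y ∈ img w ∧ b ∈ img w ∧ c ∈ img w) ∧
        ¬(pr hb b = c ∨ y = pr hb b ∨ y = pr hb c)) := by
  rw [mem_Y3_iff hb, card3 hyb hyc hbc]
  simp only [true_and, Finset.insert_subset_iff, Finset.singleton_subset_iff]
  rw [← matched_iff hb]
  constructor
  · rintro ⟨h1, h2, h3⟩
    refine ⟨by tauto, by tauto, ?_⟩
    rintro ⟨x, hx, hpx⟩
    exact h3 x hx hpx
  · rintro ⟨h1, h2, h3⟩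
    refine ⟨by tauto, by tauto, ?_⟩
    intro x hx hpx
    exact h3 ⟨x, hx, hpx⟩

lemma erase3_1 {α : Type*} [DecidableEq α] {a b c : α} (h : a ∉ ({b, c} : Finset α)) :
    ({a, b, c} : Finset α).erase a = {b, c} := Finset.erase_insert h

lemma erase3_2 {α : Type*} [DecidableEq α] {a b c : α} (h : b ∉ ({a, c} : Finset α)) :
    ({a, b, c} : Finset α).erase b = {a, c} := by
  rw [Finset.insert_comm]; exact Finset.erase_insert h

lemma erase3_3 {α : Type*} [DecidableEq α] {a b c : α} (h : c ∉ ({a, b} : Finset α)) :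
    ({a, b, c} : Finset α).erase c = {a, b} := by
  rw [triple_rot, triple_rot]; exact Finset.erase_insert h

lemma sum3 {α : Type*} [DecidableEq α] {a b c : α} (hab : a ≠ b) (hac : a ≠ c) (hbc : b ≠ c)
    (f : α → ℕ) : ∑ x ∈ ({a, b, c} : Finset α), f x = f a + f b + f c := by
  rw [Finset.sum_insert (by simp [hab, hac]), Finset.sum_insert (by simp [hbc]),
    Finset.sum_singleton, add_assoc]

lemma filter_card_eq {n : ℕ} {s : Finset (Fin n)} {p : Fin n → Prop} [DecidablePred p]
    {E : Finset (Fin n)} (h : ∀ y, y ∈ E ↔ (y ∉ s ∧ p y)) :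
    ((sᶜ).filter p).card = E.card := by
  congr 1
  ext y
  rw [Finset.mem_filter, Finset.mem_compl, h y]

lemma filter_Y2_pair (hb : Function.Bijective (Sum.elim u w)) {s : Finset (Fin (2 * m))}
    {b c : Fin (2 * m)} (hbc : b ≠ c) (hbs : b ∈ s) (hcs : c ∈ s) :
    ((sᶜ).filter fun y => insert y ({b, c} : Finset (Fin (2 * m))) ∈ Y2 u w) =
      (sᶜ).filter fun y => (pr hb b = c ∨ y = pr hb b ∨ y = pr hb c) := by
  apply Finset.filter_congr
  intro y hy
  rw [Finset.mem_compl] at hy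
  exact matched_insert hb hbc (fun h => hy (h ▸ hbs)) (fun h => hy (h ▸ hcs))

lemma filter_Y3_pair (hb : Function.Bijective (Sum.elim u w)) {s : Finset (Fin (2 * m))}
    {b c : Fin (2 * m)} (hbc : b ≠ c) (hbs : b ∈ s) (hcs : c ∈ s) :
    ((sᶜ).filter fun y => insert y ({b, c} : Finset (Fin (2 * m))) ∈ Y3 u w) =
      (sᶜ).filter fun y => (¬(y ∈ img u ∧ b ∈ img u ∧ c ∈ img u) ∧
        ¬(y ∈ img w ∧ b ∈ img w ∧ c ∈ img w) ∧
        ¬(pr hb b = c ∨ y = pr hb b ∨ y = pr hb c)) := by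
  apply Finset.filter_congr
  intro y hy
  rw [Finset.mem_compl] at hy
  exact Y3_insert hb hbc (fun h => hy (h ▸ hbs)) (fun h => hy (h ▸ hcs))


lemma Y2_card3 (hb : Function.Bijective (Sum.elim u w)) :
    ∀ t ∈ Y2 u w, t.card = 3 := fun t ht => ((mem_Y2_iff hb).mp ht).1

lemma Y3_card3 (hb : Function.Bijective (Sum.elim u w)) :
    ∀ t ∈ Y3 u w, t.card = 3 := fun t ht => ((mem_Y3_iff hb).mp ht).1

lemma Y1_card3 : ∀ t ∈ Y1 u w, t.card = 3 := fun t ht => (mem_Y1_iff.mp ht).1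

lemma wu_false (hb : Function.Bijective (Sum.elim u w)) :
    ∀ p q : Fin m, (w p = u q) = False :=
  fun p q => eq_false fun h => u_ne_w hb q p h.symm

lemma uw_false (hb : Function.Bijective (Sum.elim u w)) :
    ∀ p q : Fin m, (u p = w q) = False := fun p q => eq_false (u_ne_w hb p q)

lemma count_V1_Y2 (hb : Function.Bijective (Sum.elim u w)) {i j k : Fin m}
    (hij : i ≠ j) (hik : i ≠ k) (hjk : j ≠ k) :
    nbc (Y2 u w) {u i, u j, u k} = 6 := by
  have hui : u i ≠ u j := (u_inj hb).ne hij
  have huik : u i ≠ u k := (u_inj hb).ne hik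
  have hujk : u j ≠ u k := (u_inj hb).ne hjk
  have hscard : ({u i, u j, u k} : Finset (Fin (2 * m))).card = 3 := card3 hui huik hujk
  rw [nbc_eq_sum hscard (Y2_card3 hb), sum3 hui huik hujk]
  have e1 : ({u i, u j, u k} : Finset (Fin (2 * m))).erase (u i) = {u j, u k} :=
    erase3_1 (by simp [hui, huik])
  have e2 : ({u i, u j, u k} : Finset (Fin (2 * m))).erase (u j) = {u i, u k} :=
    erase3_2 (by simp [hui.symm, hujk])
  have e3 : ({u i, u j, u k} : Finset (Fin (2 * m))).erase (u k) = {u i, u j} :=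
    erase3_3 (by simp [huik.symm, hujk.symm])
  rw [e1, e2, e3,
    filter_Y2_pair hb hujk (by simp) (by simp),
    filter_Y2_pair hb huik (by simp) (by simp),
    filter_Y2_pair hb hui (by simp) (by simp)]
  simp only [pr_u, wu_false hb, false_or]
  have key : ∀ p q : Fin m, p ≠ q →
      ((({u i, u j, u k} : Finset (Fin (2 * m)))ᶜ).filter
        fun y => y = w p ∨ y = w q).card = 2 := by
    intro p q hpq
    rw [filter_card_eq (E := {w p, w q}) ?_, Finset.card_pair ((w_inj hb).ne hpq)]
    intro y
    simp only [Finset.mem_insert, Finset.mem_singleton]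
    constructor
    · rintro (rfl | rfl) <;> simp [wu_false hb]
    · rintro ⟨-, h⟩; exact h
  rw [key j k hjk, key i k hik, key i j hij]

lemma u_in_u : ∀ p : Fin m, (u p ∈ img u) = True := fun p => eq_true (mem_img.mpr ⟨p, rfl⟩)

lemma w_in_w : ∀ p : Fin m, (w p ∈ img w) = True := fun p => eq_true (mem_img.mpr ⟨p, rfl⟩)

lemma u_in_w (hb : Function.Bijective (Sum.elim u w)) :
    ∀ p : Fin m, (u p ∈ img w) = False :=
  fun p => eq_false (notMem_img_w hb (mem_img.mpr ⟨p, rfl⟩))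

lemma w_in_u (hb : Function.Bijective (Sum.elim u w)) :
    ∀ p : Fin m, (w p ∈ img u) = False :=
  fun p => eq_false (notMem_img_u hb (mem_img.mpr ⟨p, rfl⟩))

lemma img_w_card (hb : Function.Bijective (Sum.elim u w)) : (img w).card = m := by
  rw [img, Finset.card_image_of_injective _ (w_inj hb), Finset.card_univ, Fintype.card_fin]

lemma img_u_card (hb : Function.Bijective (Sum.elim u w)) : (img u).card = m := by
  rw [img, Finset.card_image_of_injective _ (u_inj hb), Finset.card_univ, Fintype.card_fin]

lemma count_V1_Y3 (hb : Function.Bijective (Sum.elim u w)) (hm : 3 ≤ m) {i j k : Fin m}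
    (hij : i ≠ j) (hik : i ≠ k) (hjk : j ≠ k) :
    nbc (Y3 u w) {u i, u j, u k} = 3 * m - 6 := by
  have hui : u i ≠ u j := (u_inj hb).ne hij
  have huik : u i ≠ u k := (u_inj hb).ne hik
  have hujk : u j ≠ u k := (u_inj hb).ne hjk
  have hscard : ({u i, u j, u k} : Finset (Fin (2 * m))).card = 3 := card3 hui huik hujk
  rw [nbc_eq_sum hscard (Y3_card3 hb), sum3 hui huik hujk]
  have e1 : ({u i, u j, u k} : Finset (Fin (2 * m))).erase (u i) = {u j, u k} :=
    erase3_1 (by simp [hui, huik])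
  have e2 : ({u i, u j, u k} : Finset (Fin (2 * m))).erase (u j) = {u i, u k} :=
    erase3_2 (by simp [hui.symm, hujk])
  have e3 : ({u i, u j, u k} : Finset (Fin (2 * m))).erase (u k) = {u i, u j} :=
    erase3_3 (by simp [huik.symm, hujk.symm])
  rw [e1, e2, e3,
    filter_Y3_pair hb hujk (by simp) (by simp),
    filter_Y3_pair hb huik (by simp) (by simp),
    filter_Y3_pair hb hui (by simp) (by simp)]
  simp only [pr_u, wu_false hb, false_or, u_in_u, u_in_w hb, and_true, and_false,
    not_false_iff, true_and, and_true, not_or]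
  have key : ∀ p q : Fin m, p ≠ q →
      ((({u i, u j, u k} : Finset (Fin (2 * m)))ᶜ).filter
        fun y => y ∉ img u ∧ ¬y = w p ∧ ¬y = w q).card = m - 2 := by
    intro p q hpq
    rw [filter_card_eq (E := img w \ {w p, w q}) ?_, Finset.card_sdiff_of_subset
      (by intro y hy; simp only [Finset.mem_insert, Finset.mem_singleton] at hy
          rcases hy with rfl | rfl <;> simp [w_in_w]),
      Finset.card_pair ((w_inj hb).ne hpq), img_w_card hb]
    intro y
    simp only [Finset.mem_sdiff, Finset.mem_insert, Finset.mem_singleton, not_or]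
    constructor
    · rintro ⟨hyw, h1, h2⟩
      have hyu := notMem_img_u hb hyw
      exact ⟨⟨fun h => hyu (h ▸ mem_img.mpr ⟨i, rfl⟩), fun h => hyu (h ▸ mem_img.mpr ⟨j, rfl⟩),
        fun h => hyu (h ▸ mem_img.mpr ⟨k, rfl⟩)⟩, hyu, h1, h2⟩
    · rintro ⟨-, hyu, h1, h2⟩
      exact ⟨(mem_img_or hb y).resolve_left hyu, h1, h2⟩
  rw [key j k hjk, key i k hik, key i j hij]
  omega

lemma count_V2_Y2 (hb : Function.Bijective (Sum.elim u w)) (hm : 3 ≤ m) {i j : Fin m}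
    (hij : i ≠ j) : nbc (Y2 u w) {u i, u j, w i} = 2 * m - 1 := by
  have h12 : u i ≠ u j := (u_inj hb).ne hij
  have h13 : u i ≠ w i := u_ne_w hb i i
  have h23 : u j ≠ w i := u_ne_w hb j i
  have hscard : ({u i, u j, w i} : Finset (Fin (2 * m))).card = 3 := card3 h12 h13 h23
  rw [nbc_eq_sum hscard (Y2_card3 hb), sum3 h12 h13 h23]
  have e1 : ({u i, u j, w i} : Finset (Fin (2 * m))).erase (u i) = {u j, w i} :=
    erase3_1 (by simp [h12, h13])
  have e2 : ({u i, u j, w i} : Finset (Fin (2 * m))).erase (u j) = {u i, w i} :=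
    erase3_2 (by simp [h12.symm, h23])
  have e3 : ({u i, u j, w i} : Finset (Fin (2 * m))).erase (w i) = {u i, u j} :=
    erase3_3 (by simp [h13.symm, h23.symm])
  rw [e1, e2, e3,
    filter_Y2_pair hb h23 (by simp) (by simp),
    filter_Y2_pair hb h13 (by simp) (by simp),
    filter_Y2_pair hb h12 (by simp) (by simp)]
  have f1 : (w j = w i) = False := eq_false ((w_inj hb).ne hij.symm)
  simp only [pr_u, pr_w, f1, wu_false hb, false_or]
  rw [filter_card_eq (E := {w j}) ?p1, filter_card_eq (E := (({u i, u j, w i} :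
    Finset (Fin (2 * m)))ᶜ)) ?p2, filter_card_eq (E := {w j}) ?p3]
  · rw [Finset.card_singleton, Finset.card_compl, hscard, Fintype.card_fin]
    omega
  case p1 =>
    intro y
    simp only [Finset.mem_singleton, Finset.mem_insert, Finset.mem_compl]
    constructor
    · rintro rfl
      simp [wu_false hb, f1]
    · tauto
  case p2 =>
    intro y
    simp [Finset.mem_compl]
  case p3 =>
    intro y
    simp only [Finset.mem_singleton, Finset.mem_insert, Finset.mem_compl]
    constructor
    · rintro rfl
      simp [wu_false hb, f1]
    · tauto

lemma count_V2_Y3 (hb : Function.Bijective (Sum.elim u w)) (hm : 3 ≤ m) {i j : Fin m}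
    (hij : i ≠ j) : nbc (Y3 u w) {u i, u j, w i} = 3 * m - 6 := by
  have h12 : u i ≠ u j := (u_inj hb).ne hij
  have h13 : u i ≠ w i := u_ne_w hb i i
  have h23 : u j ≠ w i := u_ne_w hb j i
  have hscard : ({u i, u j, w i} : Finset (Fin (2 * m))).card = 3 := card3 h12 h13 h23
  rw [nbc_eq_sum hscard (Y3_card3 hb), sum3 h12 h13 h23]
  have e1 : ({u i, u j, w i} : Finset (Fin (2 * m))).erase (u i) = {u j, w i} :=
    erase3_1 (by simp [h12, h13])
  have e2 : ({u i, u j, w i} : Finset (Fin (2 * m))).erase (u j) = {u i, w i} :=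
    erase3_2 (by simp [h12.symm, h23])
  have e3 : ({u i, u j, w i} : Finset (Fin (2 * m))).erase (w i) = {u i, u j} :=
    erase3_3 (by simp [h13.symm, h23.symm])
  rw [e1, e2, e3,
    filter_Y3_pair hb h23 (by simp) (by simp),
    filter_Y3_pair hb h13 (by simp) (by simp),
    filter_Y3_pair hb h12 (by simp) (by simp)]
  have f1 : (w j = w i) = False := eq_false ((w_inj hb).ne hij.symm)
  simp only [pr_u, pr_w, f1, wu_false hb, uw_false hb, false_or, u_in_u, w_in_w,
    u_in_w hb, w_in_u hb, and_true, and_false, true_and, false_and, not_false_iff,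
    true_and, not_or, eq_self_iff_true, true_or, not_true, false_or, and_true]
  rw [filter_card_eq (E := (({u i, u j, w i, w j} : Finset (Fin (2 * m))))ᶜ) ?p1,
    filter_card_eq (E := (∅ : Finset (Fin (2 * m)))) ?p2,
    filter_card_eq (E := img w \ ({w i, w j} : Finset (Fin (2 * m)))) ?p3]
  · rw [Finset.card_compl, Finset.card_empty, Finset.card_sdiff_of_subset
      (by intro y hy; simp only [Finset.mem_insert, Finset.mem_singleton] at hy
          rcases hy with rfl | rfl <;> simp [w_in_w]),
      Finset.card_pair ((w_inj hb).ne hij), img_w_card hb, Fintype.card_fin]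
    have hc4 : ({u i, u j, w i, w j} : Finset (Fin (2 * m))).card = 4 := by
      rw [Finset.card_insert_of_notMem (by simp [h12, h13, uw_false hb]),
        Finset.card_insert_of_notMem (by simp [h23, uw_false hb]),
        Finset.card_pair ((w_inj hb).ne hij)]
    rw [hc4]
    omega
  case p1 =>
    intro y
    simp only [Finset.mem_compl, Finset.mem_insert, Finset.mem_singleton, not_or]
    tauto
  case p2 =>
    intro y
    simp
  case p3 =>
    intro y
    simp only [Finset.mem_sdiff, Finset.mem_insert, Finset.mem_singleton, not_or]
    constructor
    · rintro ⟨hyw, hn1, hn2⟩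
      have hyu := notMem_img_u hb hyw
      exact ⟨⟨fun h => hyu (h ▸ mem_img.mpr ⟨i, rfl⟩), fun h => hyu (h ▸ mem_img.mpr ⟨j, rfl⟩),
        hn1⟩, hyu, hn1, hn2⟩
    · rintro ⟨-, hyu, hn1, hn2⟩
      exact ⟨(mem_img_or hb y).resolve_left hyu, hn1, hn2⟩

lemma count_V3_Y2 (hb : Function.Bijective (Sum.elim u w)) {i j k : Fin m}
    (hij : i ≠ j) (hik : i ≠ k) (hjk : j ≠ k) :
    nbc (Y2 u w) {u i, u j, w k} = 6 := by
  have h12 : u i ≠ u j := (u_inj hb).ne hij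
  have h13 : u i ≠ w k := u_ne_w hb i k
  have h23 : u j ≠ w k := u_ne_w hb j k
  have hscard : ({u i, u j, w k} : Finset (Fin (2 * m))).card = 3 := card3 h12 h13 h23
  rw [nbc_eq_sum hscard (Y2_card3 hb), sum3 h12 h13 h23]
  have e1 : ({u i, u j, w k} : Finset (Fin (2 * m))).erase (u i) = {u j, w k} :=
    erase3_1 (by simp [h12, h13])
  have e2 : ({u i, u j, w k} : Finset (Fin (2 * m))).erase (u j) = {u i, w k} :=
    erase3_2 (by simp [h12.symm, h23])
  have e3 : ({u i, u j, w k} : Finset (Fin (2 * m))).erase (w k) = {u i, u j} :=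
    erase3_3 (by simp [h13.symm, h23.symm])
  rw [e1, e2, e3,
    filter_Y2_pair hb h23 (by simp) (by simp),
    filter_Y2_pair hb h13 (by simp) (by simp),
    filter_Y2_pair hb h12 (by simp) (by simp)]
  have f1 : (w j = w k) = False := eq_false ((w_inj hb).ne hjk)
  have f2 : (w i = w k) = False := eq_false ((w_inj hb).ne hik)
  simp only [pr_u, pr_w, f1, f2, wu_false hb, false_or]
  rw [filter_card_eq (E := ({w j, u k} : Finset (Fin (2 * m)))) ?p1,
    filter_card_eq (E := ({w i, u k} : Finset (Fin (2 * m)))) ?p2,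
    filter_card_eq (E := ({w i, w j} : Finset (Fin (2 * m)))) ?p3]
  · rw [Finset.card_pair (by simp [wu_false hb]), Finset.card_pair (by simp [wu_false hb]),
      Finset.card_pair ((w_inj hb).ne hij)]
  case p1 =>
    intro y
    simp only [Finset.mem_insert, Finset.mem_singleton, Finset.mem_compl, not_or]
    constructor
    · rintro (rfl | rfl) <;>
        simp [wu_false hb, uw_false hb, f1, (u_inj hb).ne (Ne.symm hik),
          (u_inj hb).ne (Ne.symm hjk)]
    · tauto
  case p2 =>
    intro y
    simp only [Finset.mem_insert, Finset.mem_singleton, Finset.mem_compl, not_or]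
    constructor
    · rintro (rfl | rfl) <;>
        simp [wu_false hb, uw_false hb, f2, (u_inj hb).ne (Ne.symm hik),
          (u_inj hb).ne (Ne.symm hjk)]
    · tauto
  case p3 =>
    intro y
    simp only [Finset.mem_insert, Finset.mem_singleton, Finset.mem_compl, not_or]
    constructor
    · rintro (rfl | rfl) <;> simp [wu_false hb, f1, f2]
    · tauto

lemma count_V3_Y3 (hb : Function.Bijective (Sum.elim u w)) (hm : 3 ≤ m) {i j k : Fin m}
    (hij : i ≠ j) (hik : i ≠ k) (hjk : j ≠ k) :
    nbc (Y3 u w) {u i, u j, w k} = 5 * m - 13 := by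
  have h12 : u i ≠ u j := (u_inj hb).ne hij
  have h13 : u i ≠ w k := u_ne_w hb i k
  have h23 : u j ≠ w k := u_ne_w hb j k
  have hscard : ({u i, u j, w k} : Finset (Fin (2 * m))).card = 3 := card3 h12 h13 h23
  rw [nbc_eq_sum hscard (Y3_card3 hb), sum3 h12 h13 h23]
  have e1 : ({u i, u j, w k} : Finset (Fin (2 * m))).erase (u i) = {u j, w k} :=
    erase3_1 (by simp [h12, h13])
  have e2 : ({u i, u j, w k} : Finset (Fin (2 * m))).erase (u j) = {u i, w k} :=
    erase3_2 (by simp [h12.symm, h23])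
  have e3 : ({u i, u j, w k} : Finset (Fin (2 * m))).erase (w k) = {u i, u j} :=
    erase3_3 (by simp [h13.symm, h23.symm])
  rw [e1, e2, e3,
    filter_Y3_pair hb h23 (by simp) (by simp),
    filter_Y3_pair hb h13 (by simp) (by simp),
    filter_Y3_pair hb h12 (by simp) (by simp)]
  have f1 : (w j = w k) = False := eq_false ((w_inj hb).ne hjk)
  have f2 : (w i = w k) = False := eq_false ((w_inj hb).ne hik)
  simp only [pr_u, pr_w, f1, f2, wu_false hb, uw_false hb, false_or, u_in_u, w_in_w,
    u_in_w hb, w_in_u hb, and_true, and_false, true_and, false_and, not_false_iff,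
    not_or]
  rw [filter_card_eq (E := (({u i, u j, w k, w j, u k} : Finset (Fin (2 * m))))ᶜ) ?p1,
    filter_card_eq (E := (({u i, u j, w k, w i, u k} : Finset (Fin (2 * m))))ᶜ) ?p2,
    filter_card_eq (E := img w \ ({w k, w i, w j} : Finset (Fin (2 * m)))) ?p3]
  · have hc1 : ({u i, u j, w k, w j, u k} : Finset (Fin (2 * m))).card = 5 := by
      rw [Finset.card_insert_of_notMem (by simp [h12, h13, uw_false hb,
          (u_inj hb).ne hik]),
        Finset.card_insert_of_notMem (by simp [h23, uw_false hb, (u_inj hb).ne hjk]),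
        Finset.card_insert_of_notMem (by simp [(w_inj hb).ne (Ne.symm hjk), wu_false hb]),
        Finset.card_insert_of_notMem (by simp [wu_false hb]),
        Finset.card_singleton]
    have hc2 : ({u i, u j, w k, w i, u k} : Finset (Fin (2 * m))).card = 5 := by
      rw [Finset.card_insert_of_notMem (by simp [h12, h13, uw_false hb,
          (u_inj hb).ne hik]),
        Finset.card_insert_of_notMem (by simp [h23, uw_false hb, (u_inj hb).ne hjk]),
        Finset.card_insert_of_notMem (by simp [wu_false hb, (w_inj hb).ne (Ne.symm hik)]),
        Finset.card_insert_of_notMem (by simp [wu_false hb]),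
        Finset.card_singleton]
    rw [Finset.card_compl, Finset.card_compl, hc1, hc2, Fintype.card_fin,
      Finset.card_sdiff_of_subset
        (by intro y hy; simp only [Finset.mem_insert, Finset.mem_singleton] at hy
            rcases hy with rfl | rfl | rfl <;> simp [w_in_w]),
      img_w_card hb]
    have hc3 : ({w k, w i, w j} : Finset (Fin (2 * m))).card = 3 :=
      card3 ((w_inj hb).ne (Ne.symm hik)) ((w_inj hb).ne (Ne.symm hjk)) ((w_inj hb).ne hij)
    rw [hc3]
    omega
  case p1 =>
    intro y
    simp only [Finset.mem_compl, Finset.mem_insert, Finset.mem_singleton, not_or]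
    tauto
  case p2 =>
    intro y
    simp only [Finset.mem_compl, Finset.mem_insert, Finset.mem_singleton, not_or]
    tauto
  case p3 =>
    intro y
    simp only [Finset.mem_sdiff, Finset.mem_insert, Finset.mem_singleton, not_or]
    constructor
    · rintro ⟨hyw, hn1, hn2, hn3⟩
      have hyu := notMem_img_u hb hyw
      exact ⟨⟨fun h => hyu (h ▸ mem_img.mpr ⟨i, rfl⟩), fun h => hyu (h ▸ mem_img.mpr ⟨j, rfl⟩),
        hn1⟩, hyu, hn2, hn3⟩
    · rintro ⟨⟨-, -, hn1⟩, hyu, hn2, hn3⟩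
      exact ⟨(mem_img_or hb y).resolve_left hyu, hn1, hn2, hn3⟩

lemma Y1_comm : Y1 u w = Y1 w u := by
  ext s
  simp only [Y1, Finset.mem_filter, Finset.mem_univ, true_and]
  tauto

lemma Y2_comm : Y2 u w = Y2 w u := by
  ext s
  simp only [Y2, Finset.mem_filter, Finset.mem_univ, true_and]
  constructor <;> rintro ⟨i, j, hij, h | h⟩ <;> exact ⟨i, j, hij, by tauto⟩

lemma Y3_comm : Y3 u w = Y3 w u := by
  ext s
  simp only [Y3, Finset.mem_filter, Finset.mem_univ, true_and]
  constructor <;> rintro ⟨i, j, k, hij, hik, hjk, h | h⟩ <;>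
    exact ⟨i, j, k, hij, hik, hjk, by tauto⟩

lemma hb_swap (hb : Function.Bijective (Sum.elim u w)) :
    Function.Bijective (Sum.elim w u) :=
  selim_bij (w_inj hb) (u_inj hb) (fun i j h => u_ne_w hb j i h.symm)

lemma disj12 (hb : Function.Bijective (Sum.elim u w)) : Disjoint (Y1 u w) (Y2 u w) := by
  rw [Finset.disjoint_left]
  intro s h1 h2
  obtain ⟨-, hsub⟩ := mem_Y1_iff.mp h1
  obtain ⟨-, x, hx, hpx⟩ := (mem_Y2_iff hb).mp h2
  rcases hsub with hsub | hsub
  · exact notMem_img_u hb (pr_mem_img_w hb (hsub hx)) (hsub hpx)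
  · exact notMem_img_w hb (pr_mem_img_u hb (hsub hx)) (hsub hpx)

lemma disj13 (hb : Function.Bijective (Sum.elim u w)) : Disjoint (Y1 u w) (Y3 u w) := by
  rw [Finset.disjoint_left]
  intro s h1 h3
  obtain ⟨-, hsub⟩ := mem_Y1_iff.mp h1
  obtain ⟨hc, hnu, hnw, -⟩ := (mem_Y3_iff hb).mp h3
  rcases hsub with hsub | hsub
  · exact hnu hsub
  · exact hnw hsub

lemma disj23 (hb : Function.Bijective (Sum.elim u w)) : Disjoint (Y2 u w) (Y3 u w) := by
  rw [Finset.disjoint_left]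
  intro s h2 h3
  obtain ⟨-, x, hx, hpx⟩ := (mem_Y2_iff hb).mp h2
  obtain ⟨-, -, -, hpart⟩ := (mem_Y3_iff hb).mp h3
  exact hpart x hx hpx

lemma tri (hb : Function.Bijective (Sum.elim u w)) {s : Finset (Fin (2 * m))}
    (hs3 : s.card = 3) : s ∈ Y1 u w ∨ s ∈ Y2 u w ∨ s ∈ Y3 u w := by
  by_cases h1 : s ⊆ img u ∨ s ⊆ img w
  · exact Or.inl (mem_Y1_iff.mpr ⟨hs3, h1⟩)
  by_cases h2 : ∃ x ∈ s, pr hb x ∈ s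
  · exact Or.inr (Or.inl ((mem_Y2_iff hb).mpr ⟨hs3, h2⟩))
  · push_neg at h1 h2
    exact Or.inr (Or.inr ((mem_Y3_iff hb).mpr ⟨hs3, h1.1, h1.2, h2⟩))

lemma card3_of_mem_union (hb : Function.Bijective (Sum.elim u w)) :
    ∀ t ∈ (Y1 u w ∪ Y2 u w) ∪ Y3 u w, t.card = 3 := by
  intro t ht
  rcases Finset.mem_union.mp ht with ht | ht
  · rcases Finset.mem_union.mp ht with ht | ht
    · exact Y1_card3 t ht
    · exact Y2_card3 hb t ht
  · exact Y3_card3 hb t ht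

lemma deg (hb : Function.Bijective (Sum.elim u w)) (hm : 3 ≤ m) {s : Finset (Fin (2 * m))}
    (hs3 : s.card = 3) : nbc ((Y1 u w ∪ Y2 u w) ∪ Y3 u w) s = 6 * m - 9 := by
  rw [nbc_eq_sum hs3 (card3_of_mem_union hb)]
  have hconst : ∀ x ∈ s, ((sᶜ).filter fun y =>
      insert y (s.erase x) ∈ (Y1 u w ∪ Y2 u w) ∪ Y3 u w).card = 2 * m - 3 := by
    intro x hx
    have hfull : ((sᶜ).filter fun y =>
        insert y (s.erase x) ∈ (Y1 u w ∪ Y2 u w) ∪ Y3 u w) = sᶜ := by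
      apply Finset.filter_true_of_mem
      intro y hy
      rw [Finset.mem_compl] at hy
      have hc3 : (insert y (s.erase x)).card = 3 := by
        rw [Finset.card_insert_of_notMem (fun hmm => hy (Finset.mem_of_mem_erase hmm)),
          Finset.card_erase_of_mem hx, hs3]
      rcases tri hb hc3 with h | h | h
      · exact Finset.mem_union_left _ (Finset.mem_union_left _ h)
      · exact Finset.mem_union_left _ (Finset.mem_union_right _ h)
      · exact Finset.mem_union_right _ h
    rw [hfull, Finset.card_compl, hs3, Fintype.card_fin]
  rw [Finset.sum_congr rfl hconst, Finset.sum_const, hs3, smul_eq_mul]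
  omega

lemma nbc_union {n : ℕ} {X X' : Finset (Finset (Fin n))} (h : Disjoint X X')
    (s : Finset (Fin n)) : nbc (X ∪ X') s = nbc X s + nbc X' s := by
  rw [nbc, nbc, nbc, Finset.filter_union,
    Finset.card_union_of_disjoint (Finset.disjoint_filter_filter h)]

lemma Y1_struct (hb : Function.Bijective (Sum.elim u w)) {s : Finset (Fin (2 * m))}
    (h : s ∈ Y1 u w) :
    (∃ i j k, i ≠ j ∧ i ≠ k ∧ j ≠ k ∧ s = {u i, u j, u k}) ∨
    (∃ i j k, i ≠ j ∧ i ≠ k ∧ j ≠ k ∧ s = {w i, w j, w k}) := by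
  obtain ⟨h3, hsub⟩ := mem_Y1_iff.mp h
  obtain ⟨a, b, c, hab, hac, hbc, rfl⟩ := Finset.card_eq_three.mp h3
  rcases hsub with hsub | hsub
  · obtain ⟨i, hi⟩ := mem_img.mp (hsub (show a ∈ ({a, b, c} : Finset (Fin (2 * m))) by simp))
    obtain ⟨j, hj⟩ := mem_img.mp (hsub (show b ∈ ({a, b, c} : Finset (Fin (2 * m))) by simp))
    obtain ⟨k, hk⟩ := mem_img.mp (hsub (show c ∈ ({a, b, c} : Finset (Fin (2 * m))) by simp))
    subst hi hj hk
    exact Or.inl ⟨i, j, k, fun h => hab (by rw [h]), fun h => hac (by rw [h]),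
      fun h => hbc (by rw [h]), rfl⟩
  · obtain ⟨i, hi⟩ := mem_img.mp (hsub (show a ∈ ({a, b, c} : Finset (Fin (2 * m))) by simp))
    obtain ⟨j, hj⟩ := mem_img.mp (hsub (show b ∈ ({a, b, c} : Finset (Fin (2 * m))) by simp))
    obtain ⟨k, hk⟩ := mem_img.mp (hsub (show c ∈ ({a, b, c} : Finset (Fin (2 * m))) by simp))
    subst hi hj hk
    exact Or.inr ⟨i, j, k, fun h => hab (by rw [h]), fun h => hac (by rw [h]),
      fun h => hbc (by rw [h]), rfl⟩


lemma Y2_struct {s : Finset (Fin (2 * m))} (h : s ∈ Y2 u w) :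
    ∃ i j, i ≠ j ∧ (s = {u i, u j, w i} ∨ s = {w i, w j, u i}) :=
  (Finset.mem_filter.mp h).2

lemma Y3_struct {s : Finset (Fin (2 * m))} (h : s ∈ Y3 u w) :
    ∃ i j k, i ≠ j ∧ i ≠ k ∧ j ≠ k ∧ (s = {u i, u j, w k} ∨ s = {w i, w j, u k}) :=
  (Finset.mem_filter.mp h).2

lemma nbcY2_of_Y1 (hb : Function.Bijective (Sum.elim u w)) {s : Finset (Fin (2 * m))}
    (h : s ∈ Y1 u w) : nbc (Y2 u w) s = 6 := by
  rcases Y1_struct hb h with ⟨i, j, k, hij, hik, hjk, rfl⟩ | ⟨i, j, k, hij, hik, hjk, rfl⟩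
  · exact count_V1_Y2 hb hij hik hjk
  · rw [Y2_comm]; exact count_V1_Y2 (hb_swap hb) hij hik hjk

lemma nbcY3_of_Y1 (hb : Function.Bijective (Sum.elim u w)) (hm : 3 ≤ m)
    {s : Finset (Fin (2 * m))} (h : s ∈ Y1 u w) : nbc (Y3 u w) s = 3 * m - 6 := by
  rcases Y1_struct hb h with ⟨i, j, k, hij, hik, hjk, rfl⟩ | ⟨i, j, k, hij, hik, hjk, rfl⟩
  · exact count_V1_Y3 hb hm hij hik hjk
  · rw [Y3_comm]; exact count_V1_Y3 (hb_swap hb) hm hij hik hjk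

lemma nbcY2_of_Y2 (hb : Function.Bijective (Sum.elim u w)) (hm : 3 ≤ m)
    {s : Finset (Fin (2 * m))} (h : s ∈ Y2 u w) : nbc (Y2 u w) s = 2 * m - 1 := by
  rcases Y2_struct h with ⟨i, j, hij, rfl | rfl⟩
  · exact count_V2_Y2 hb hm hij
  · rw [Y2_comm]; exact count_V2_Y2 (hb_swap hb) hm hij

lemma nbcY3_of_Y2 (hb : Function.Bijective (Sum.elim u w)) (hm : 3 ≤ m)
    {s : Finset (Fin (2 * m))} (h : s ∈ Y2 u w) : nbc (Y3 u w) s = 3 * m - 6 := by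
  rcases Y2_struct h with ⟨i, j, hij, rfl | rfl⟩
  · exact count_V2_Y3 hb hm hij
  · rw [Y3_comm]; exact count_V2_Y3 (hb_swap hb) hm hij

lemma nbcY2_of_Y3 (hb : Function.Bijective (Sum.elim u w)) {s : Finset (Fin (2 * m))}
    (h : s ∈ Y3 u w) : nbc (Y2 u w) s = 6 := by
  rcases Y3_struct h with ⟨i, j, k, hij, hik, hjk, rfl | rfl⟩
  · exact count_V3_Y2 hb hij hik hjk
  · rw [Y2_comm]; exact count_V3_Y2 (hb_swap hb) hij hik hjk

lemma nbcY3_of_Y3 (hb : Function.Bijective (Sum.elim u w)) (hm : 3 ≤ m)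
    {s : Finset (Fin (2 * m))} (h : s ∈ Y3 u w) : nbc (Y3 u w) s = 5 * m - 13 := by
  rcases Y3_struct h with ⟨i, j, k, hij, hik, hjk, rfl | rfl⟩
  · exact count_V3_Y3 hb hm hij hik hjk
  · rw [Y3_comm]; exact count_V3_Y3 (hb_swap hb) hm hij hik hjk

lemma sum_nbc (hb : Function.Bijective (Sum.elim u w)) (hm : 3 ≤ m)
    {s : Finset (Fin (2 * m))} (h3 : s.card = 3) :
    nbc (Y1 u w) s + nbc (Y2 u w) s + nbc (Y3 u w) s = 6 * m - 9 := by
  have hd := deg hb hm h3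
  rwa [nbc_union (Finset.disjoint_union_left.mpr ⟨disj13 hb, disj23 hb⟩),
    nbc_union (disj12 hb)] at hd

end AUX


/-- `Π₂ = {X₁ ∪ X₃, X₂}` is an equitable 2-partition of `J(2m,3)`
with quotient matrix `[[6m-15, 6], [4m-8, 2m-1]]`, and `Π₃ = {X₃, X₁ ∪ X₂}` is
an equitable 2-partition with quotient matrix `[[5m-13, m+4], [3m-6, 3m-3]]`. -/
theorem stmt6 (m : ℕ) (hm : 3 ≤ m) (u w : Fin m → Fin (2 * m))
    (hu : Function.Injective u) (hw : Function.Injective w)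
    (huw : ∀ i j, u i ≠ w j) :
    ((∀ s : Finset (Fin (2 * m)), s.card = 3 ↔ s ∈ (Y1 u w ∪ Y3 u w) ∪ Y2 u w) ∧
     Disjoint (Y1 u w ∪ Y3 u w) (Y2 u w) ∧
     (∀ s ∈ Y1 u w ∪ Y3 u w,
       nbc (Y1 u w ∪ Y3 u w) s = 6 * m - 15 ∧ nbc (Y2 u w) s = 6) ∧
     (∀ s ∈ Y2 u w,
       nbc (Y1 u w ∪ Y3 u w) s = 4 * m - 8 ∧ nbc (Y2 u w) s = 2 * m - 1)) ∧
    ((∀ s : Finset (Fin (2 * m)), s.card = 3 ↔ s ∈ Y3 u w ∪ (Y1 u w ∪ Y2 u w)) ∧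
     Disjoint (Y3 u w) (Y1 u w ∪ Y2 u w) ∧
     (∀ s ∈ Y3 u w,
       nbc (Y3 u w) s = 5 * m - 13 ∧ nbc (Y1 u w ∪ Y2 u w) s = m + 4) ∧
     (∀ s ∈ Y1 u w ∪ Y2 u w,
       nbc (Y3 u w) s = 3 * m - 6 ∧ nbc (Y1 u w ∪ Y2 u w) s = 3 * m - 3)) := by
  have hb : Function.Bijective (Sum.elim u w) := selim_bij hu hw huw
  have hcardmem : ∀ s : Finset (Fin (2 * m)),
      s ∈ Y1 u w ∨ s ∈ Y2 u w ∨ s ∈ Y3 u w → s.card = 3 := by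
    rintro s (h | h | h)
    · exact Y1_card3 s h
    · exact Y2_card3 hb s h
    · exact Y3_card3 hb s h
  refine ⟨⟨?_, ?_, ?_, ?_⟩, ?_, ?_, ?_, ?_⟩
  · intro s
    constructor
    · intro h3
      rcases tri hb h3 with h | h | h
      · exact Finset.mem_union_left _ (Finset.mem_union_left _ h)
      · exact Finset.mem_union_right _ h
      · exact Finset.mem_union_left _ (Finset.mem_union_right _ h)
    · intro h
      rcases Finset.mem_union.mp h with h | h
      · rcases Finset.mem_union.mp h with h | h
        · exact hcardmem s (Or.inl h)
        · exact hcardmem s (Or.inr (Or.inr h))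
      · exact hcardmem s (Or.inr (Or.inl h))
  · exact Finset.disjoint_union_left.mpr ⟨disj12 hb, (disj23 hb).symm⟩
  · intro s hs
    rcases Finset.mem_union.mp hs with h | h
    · have h3 : s.card = 3 := Y1_card3 s h
      have hsum := sum_nbc hb hm h3
      have hn2 := nbcY2_of_Y1 hb h
      have hn3 := nbcY3_of_Y1 hb hm h
      rw [nbc_union (disj13 hb)]
      constructor <;> omega
    · have h3 : s.card = 3 := Y3_card3 hb s h
      have hsum := sum_nbc hb hm h3
      have hn2 := nbcY2_of_Y3 hb h
      have hn3 := nbcY3_of_Y3 hb hm h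
      rw [nbc_union (disj13 hb)]
      constructor <;> omega
  · intro s hs
    have h3 : s.card = 3 := Y2_card3 hb s hs
    have hsum := sum_nbc hb hm h3
    have hn2 := nbcY2_of_Y2 hb hm hs
    have hn3 := nbcY3_of_Y2 hb hm hs
    rw [nbc_union (disj13 hb)]
    constructor <;> omega
  · intro s
    constructor
    · intro h3
      rcases tri hb h3 with h | h | h
      · exact Finset.mem_union_right _ (Finset.mem_union_left _ h)
      · exact Finset.mem_union_right _ (Finset.mem_union_right _ h)
      · exact Finset.mem_union_left _ h
    · intro h
      rcases Finset.mem_union.mp h with h | h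
      · exact hcardmem s (Or.inr (Or.inr h))
      · rcases Finset.mem_union.mp h with h | h
        · exact hcardmem s (Or.inl h)
        · exact hcardmem s (Or.inr (Or.inl h))
  · exact Finset.disjoint_union_right.mpr ⟨(disj13 hb).symm, (disj23 hb).symm⟩
  · intro s hs
    have h3 : s.card = 3 := Y3_card3 hb s hs
    have hsum := sum_nbc hb hm h3
    have hn2 := nbcY2_of_Y3 hb hs
    have hn3 := nbcY3_of_Y3 hb hm hs
    rw [nbc_union (disj12 hb)]
    constructor <;> omega
  · intro s hs
    rcases Finset.mem_union.mp hs with h | h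
    · have h3 : s.card = 3 := Y1_card3 s h
      have hsum := sum_nbc hb hm h3
      have hn2 := nbcY2_of_Y1 hb h
      have hn3 := nbcY3_of_Y1 hb hm h
      rw [nbc_union (disj12 hb)]
      constructor <;> omega
    · have h3 : s.card = 3 := Y2_card3 hb s h
      have hsum := sum_nbc hb hm h3
      have hn2 := nbcY2_of_Y2 hb hm h
      have hn3 := nbcY3_of_Y2 hb hm h
      rw [nbc_union (disj12 hb)]
      constructor <;> omega
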